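/- arXiv:1510.08276 — 3 statements merged into one kernel-verified Lean document; each statement's English description precedes it below -/
import Mathlib

section
/- Let G be a connected F-free finite simple graph and let M be a module of G with at least two vertices and M ≠ V(G). Then the subgraph G[M] induced by M contains no induced path on four vertices and no induced cycle on four vertices. -/
open SimpleGraph

/-- `M` is a module of `G`: every vertex outside `M` is adjacent to all
vertices of `M` or to none of them. -/
def IsModule {V : Type*} (G : SimpleGraph V) (M : Set V) : Prop :=
  ∀ x ∉ M, (∀ a ∈ M, G.Adj x a) ∨ (∀ a ∈ M, ¬ G.Adj x a)

/-- A module is strong if it overlaps no other module. -/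
def IsStrongModule {V : Type*} (G : SimpleGraph V) (M : Set V) : Prop :=
  IsModule G M ∧
    ∀ M' : Set V, IsModule G M' → (M ∩ M').Nonempty → M ⊆ M' ∨ M' ⊆ M

/-- A nonempty strong module ≠ V(G) whose only proper strong superset is V(G). -/
def IsMaximalStrongModule {V : Type*} (G : SimpleGraph V) (M : Set V) : Prop :=
  IsStrongModule G M ∧ M.Nonempty ∧ M ≠ Set.univ ∧
    ∀ M' : Set V, IsStrongModule G M' → M ⊂ M' → M' = Set.univ

/-- Quotient graph defined by a family `P` of vertex sets: two members are
adjacent iff they are distinct and completely adjacent in `G`. -/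
def QuotientOn {V : Type*} (G : SimpleGraph V) (P : Set (Set V)) : SimpleGraph P where
  Adj A B := A ≠ B ∧ ∀ a ∈ (A : Set V), ∀ b ∈ (B : Set V), G.Adj a b
  symm := by
    constructor
    intro A B h
    exact ⟨Ne.symm h.1, fun b hb a ha => (h.2 a ha b hb).symm⟩
  loopless := by
    constructor
    intro A h
    exact h.1 rfl

/-- The quotient graph Q̃(G), on the maximal strong modules of `G`. -/
def QuotientGraph {V : Type*} (G : SimpleGraph V) :
    SimpleGraph {M : Set V | IsMaximalStrongModule G M} :=
  QuotientOn G {M : Set V | IsMaximalStrongModule G M}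

/-- A graph is prime if it has at least four vertices and all its modules are
trivial (empty, singletons, or the whole vertex set). -/
def IsPrimeGraph {W : Type*} (H : SimpleGraph W) : Prop :=
  4 ≤ Nat.card W ∧
    ∀ M : Set W, IsModule H M → M = ∅ ∨ M = Set.univ ∨ ∃ w, M = {w}

/-- `G` contains an induced copy of `H`. -/
def HasInducedCopy {W V : Type*} (H : SimpleGraph W) (G : SimpleGraph V) : Prop :=
  ∃ f : W ↪ V, ∀ a b : W, G.Adj (f a) (f b) ↔ H.Adj a b

/-- The path on four vertices. -/
def GraphP4 : SimpleGraph (Fin 4) :=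
  SimpleGraph.fromRel fun a b =>
    (a, b) ∈ ([(0, 1), (1, 2), (2, 3)] : List (Fin 4 × Fin 4))

/-- The cycle on four vertices. -/
def GraphC4 : SimpleGraph (Fin 4) :=
  SimpleGraph.fromRel fun a b =>
    (a, b) ∈ ([(0, 1), (1, 2), (2, 3), (0, 3)] : List (Fin 4 × Fin 4))

/-- The bull: triangle 0,1,2 with pendant 3 at 0 and pendant 4 at 2. -/
def GraphBull : SimpleGraph (Fin 5) :=
  SimpleGraph.fromRel fun a b =>
    (a, b) ∈ ([(0, 1), (0, 2), (1, 2), (0, 3), (2, 4)] : List (Fin 5 × Fin 5))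

/-- The dart: triangle 0,1,2; vertex 4 adjacent exactly to 0 and 2;
vertex 3 adjacent exactly to 0. -/
def GraphDart : SimpleGraph (Fin 5) :=
  SimpleGraph.fromRel fun a b =>
    (a, b) ∈ ([(0, 1), (0, 2), (1, 2), (0, 4), (2, 4), (0, 3)] : List (Fin 5 × Fin 5))

/-- The fox: adjacent vertices 0,1 and pairwise nonadjacent 2,3,4, each
adjacent to both 0 and 1 (K5 minus a triangle). -/
def GraphFox : SimpleGraph (Fin 5) :=
  SimpleGraph.fromRel fun a b =>
    (a, b) ∈ ([(0, 1), (0, 2), (0, 3), (0, 4), (1, 2), (1, 3), (1, 4)] : List (Fin 5 × Fin 5))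

/-- The gem: induced path 0-1-2-3 plus vertex 4 adjacent to all of them. -/
def GraphGem : SimpleGraph (Fin 5) :=
  SimpleGraph.fromRel fun a b =>
    (a, b) ∈ ([(0, 1), (1, 2), (2, 3), (0, 4), (1, 4), (2, 4), (3, 4)] : List (Fin 5 × Fin 5))

/-- `G` has no induced subgraph isomorphic to a member of
F = {C4, bull, dart, fox, gem}. -/
def FFree {V : Type*} (G : SimpleGraph V) : Prop :=
  ¬ HasInducedCopy GraphC4 G ∧ ¬ HasInducedCopy GraphBull G ∧
  ¬ HasInducedCopy GraphDart G ∧ ¬ HasInducedCopy GraphFox G ∧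
  ¬ HasInducedCopy GraphGem G

/-- `X` is an association set of `G`: the graph `G - X` has no induced `P₃`,
i.e., every component of `G - X` is a clique. -/
def IsAssociationSet {V : Type*} (G : SimpleGraph V) (X : Set V) : Prop :=
  ∀ a b c : V, a ∉ X → b ∉ X → c ∉ X →
    G.Adj a b → G.Adj b c → a ≠ c → G.Adj a c

/-- `X` is a dissociation set of `G`: the graph `G - X` has no `P₃` subgraph,
i.e., every component of `G - X` has at most two vertices. -/
def IsDissociationSet {V : Type*} (G : SimpleGraph V) (X : Set V) : Prop :=
  ∀ a b c : V, a ∉ X → b ∉ X → c ∉ X → G.Adj a b → G.Adj b c → a = c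

/-- Minimum cardinality of an association set of `G`. -/
noncomputable def optAsso {V : Type*} (G : SimpleGraph V) : ℕ :=
  sInf {n : ℕ | ∃ X : Set V, IsAssociationSet G X ∧ X.ncard = n}

/-- Minimum cardinality of a dissociation set of `G`. -/
noncomputable def optDiss {V : Type*} (G : SimpleGraph V) : ℕ :=
  sInf {n : ℕ | ∃ X : Set V, IsDissociationSet G X ∧ X.ncard = n}

/-!
Connectedness yields an edge leaving the module `M`; its outer end is then adjacent to all
of `M`. Together with an induced `P₄` of `G[M]` this vertex forms a gem, and an induced `C₄`
of `G[M]` is one of `G`.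
-/

section

variable {V : Type*} {G : SimpleGraph V}

theorem HasInducedCopy.of_induce {W : Type*} {H : SimpleGraph W} {s : Set V}
    (h : HasInducedCopy H (G.induce s)) : HasInducedCopy H G :=
  let ⟨f, hf⟩ := h
  ⟨f.trans (Function.Embedding.subtype _), hf⟩

/-- `K` is the cone over `H` with apex `Fin.last n`. -/
theorem HasInducedCopy.cone {n : ℕ} {H : SimpleGraph (Fin n)} {K : SimpleGraph (Fin (n + 1))}
    (hK : ∀ i j : Fin n, K.Adj i.castSucc j.castSucc ↔ H.Adj i j)
    (hK_last : ∀ i : Fin n, K.Adj i.castSucc (Fin.last n)) {s : Set V}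
    (h : HasInducedCopy H (G.induce s)) {x : V} (hx : ∀ a ∈ s, G.Adj x a) :
    HasInducedCopy K G := by
  obtain ⟨f, hf⟩ := h
  set g := f.trans (Function.Embedding.subtype _)
  have hxg : ∀ i, G.Adj x (g i) := fun i => hx _ (f i).2
  have hx_range : x ∉ Set.range g := fun ⟨i, hi⟩ => (hxg i).ne hi.symm
  refine ⟨Fin.Embedding.snoc g hx_range, fun a b => ?_⟩
  induction a using Fin.lastCases with
  | last =>
    induction b using Fin.lastCases with
    | last => simp only [Fin.Embedding.snoc_last, G.irrefl, K.irrefl]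
    | cast j =>
      simp only [Fin.Embedding.snoc_castSucc, Fin.Embedding.snoc_last]
      exact iff_of_true (hxg j) (hK_last j).symm
  | cast i =>
    induction b using Fin.lastCases with
    | last =>
      simp only [Fin.Embedding.snoc_castSucc, Fin.Embedding.snoc_last]
      exact iff_of_true (hxg i).symm (hK_last i)
    | cast j =>
      simp only [Fin.Embedding.snoc_castSucc]
      exact (hf i j).trans (hK i j).symm

theorem IsModule.exists_forall_adj (hG : G.Preconnected) {M : Set V} (hM : IsModule G M)
    (hne : M.Nonempty) (hM_univ : M ≠ Set.univ) : ∃ x ∉ M, ∀ a ∈ M, G.Adj x a := by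
  obtain ⟨m, hm⟩ := hne
  obtain ⟨y, hy⟩ := (Set.ne_univ_iff_exists_notMem M).1 hM_univ
  obtain ⟨d, -, hd_mem, hd_notMem⟩ := (hG m y).some.exists_boundary_dart M hm hy
  exact ⟨d.snd, hd_notMem, (hM _ hd_notMem).resolve_right fun h => h _ hd_mem d.adj.symm⟩

end

theorem graphGem_adj_castSucc (i j : Fin 4) :
    GraphGem.Adj i.castSucc j.castSucc ↔ GraphP4.Adj i j := by
  revert i j; simp only [GraphGem, GraphP4, fromRel_adj]; decide

theorem graphGem_adj_last (i : Fin 4) : GraphGem.Adj i.castSucc (Fin.last 4) := by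
  revert i; simp only [GraphGem, fromRel_adj]; decide

theorem stmt_13_general {V : Type*} (G : SimpleGraph V) (hconn : G.Connected)
    (hF : FFree G) (M : Set V) (hmod : IsModule G M)
    (hne : M ≠ Set.univ) :
    ¬ HasInducedCopy GraphP4 (G.induce M) ∧ ¬ HasInducedCopy GraphC4 (G.induce M) := by
  refine ⟨fun hP4 => ?_, fun hC4 => hF.1 (HasInducedCopy.of_induce hC4)⟩
  have hM : M.Nonempty := hP4.elim fun f _ => ⟨_, (f 0).2⟩
  obtain ⟨x, -, hx⟩ := hmod.exists_forall_adj hconn.preconnected hM hne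
  exact hF.2.2.2.2 (HasInducedCopy.cone graphGem_adj_castSucc graphGem_adj_last hP4 hx)

/-- In a connected F-free graph, every nontrivial module `M`
(with at least two vertices and `M ≠ V(G)`) induces a graph with no induced
`P₄` and no induced `C₄`. -/
theorem stmt_13 {V : Type*} [Fintype V] (G : SimpleGraph V) (hconn : G.Connected)
    (hF : FFree G) (M : Set V) (hmod : IsModule G M) (h2 : 2 ≤ M.ncard)
    (hne : M ≠ Set.univ) :
    ¬ HasInducedCopy GraphP4 (G.induce M) ∧ ¬ HasInducedCopy GraphC4 (G.induce M) :=
  stmt_13_general G hconn hF M hmod hne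
end

section
/- Let G be a finite simple graph whose vertex set is partitioned into three sets U, C1, C2 such that every vertex of U is adjacent to all other vertices of G, C1 and C2 both induce cliques, and there is no edge between C1 and C2. Then opt_asso(G) = min(|U|, |C1|, |C2|). -/
open SimpleGraph

/-! Removing `U` leaves the two cliques `C1`, `C2`, and removing `C1` (or `C2`) leaves a clique
since `U` is universal; so each of the three sets is an association set. Conversely, an
association set `X` missing some `u ∈ U`, `a ∈ C1` and `c ∈ C2` would leave the induced path
`a – u – c` in `G - X`. -/

section AssociationSet

variable {V : Type*} {G : SimpleGraph V}

theorem isAssociationSet_of_isClique_compl {X : Set V} (h : G.IsClique Xᶜ) :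
    IsAssociationSet G X :=
  fun _ _ _ ha _ hc _ _ hac => h ha hc hac

theorem isAssociationSet_of_compl_subset_union {X A B : Set V} (hA : G.IsClique A)
    (hB : G.IsClique B) (hAB : ∀ a ∈ A, ∀ b ∈ B, ¬ G.Adj a b) (hX : Xᶜ ⊆ A ∪ B) :
    IsAssociationSet G X := by
  intro a b c ha hb hc hab hbc hac
  rcases hX ha with ha | ha <;> rcases hX hb with hb | hb <;> rcases hX hc with hc | hc
  all_goals first
    | exact hA ha hc hac | exact hB ha hc hac
    | exact absurd hab (hAB _ ‹_› _ ‹_›) | exact absurd hab.symm (hAB _ ‹_› _ ‹_›)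
    | exact absurd hbc (hAB _ ‹_› _ ‹_›) | exact absurd hbc.symm (hAB _ ‹_› _ ‹_›)

theorem isClique_union_of_forall_adj {U C : Set V} (hU : ∀ u ∈ U, ∀ v, v ≠ u → G.Adj u v)
    (hC : G.IsClique C) : G.IsClique (U ∪ C) := by
  rintro v (hv | hv) w (hw | hw) hvw
  · exact hU v hv w hvw.symm
  · exact hU v hv w hvw.symm
  · exact (hU w hw v hvw).symm
  · exact hC hv hw hvw

theorem IsAssociationSet.adj_of_forall_adj {X : Set V} (hX : IsAssociationSet G X) {u a c : V}
    (hu : ∀ v, v ≠ u → G.Adj u v) (huX : u ∉ X) (haX : a ∉ X) (hcX : c ∉ X)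
    (hau : a ≠ u) (hcu : c ≠ u) (hac : a ≠ c) : G.Adj a c :=
  hX a u c haX huX hcX (hu a hau).symm (hu c hcu) hac

theorem optAsso_le_ncard {X : Set V} (hX : IsAssociationSet G X) : optAsso G ≤ X.ncard :=
  Nat.sInf_le ⟨X, hX, rfl⟩

theorem exists_isAssociationSet_ncard_eq_optAsso (G : SimpleGraph V) :
    ∃ X, IsAssociationSet G X ∧ X.ncard = optAsso G :=
  Nat.sInf_mem (s := {n | ∃ X, IsAssociationSet G X ∧ X.ncard = n})
    ⟨_, Set.univ, isAssociationSet_of_isClique_compl (by simp), rfl⟩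

end AssociationSet

/-- If `V(G)` is partitioned into a set `U` of universal vertices
and two disjoint cliques `C1`, `C2` with no edge between them, then
`opt_asso(G) = min(|U|, |C1|, |C2|)`. -/
theorem stmt_15 {V : Type*} [Fintype V] (G : SimpleGraph V) (U C1 C2 : Set V)
    (hUC1 : Disjoint U C1) (hUC2 : Disjoint U C2) (hC1C2 : Disjoint C1 C2)
    (hcover : U ∪ C1 ∪ C2 = Set.univ)
    (huniv : ∀ u ∈ U, ∀ v : V, v ≠ u → G.Adj u v)
    (hc1 : G.IsClique C1) (hc2 : G.IsClique C2)
    (hnoedge : ∀ a ∈ C1, ∀ b ∈ C2, ¬ G.Adj a b) :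
    optAsso G = min (min U.ncard C1.ncard) C2.ncard := by
  have hmem : ∀ v, v ∈ U ∨ v ∈ C1 ∨ v ∈ C2 := fun v => by
    simpa [or_assoc] using hcover.ge (Set.mem_univ v)
  have hU : IsAssociationSet G U :=
    isAssociationSet_of_compl_subset_union hc1 hc2 hnoedge fun v hv => (hmem v).resolve_left hv
  have hC1 : IsAssociationSet G C1 :=
    isAssociationSet_of_isClique_compl <| (isClique_union_of_forall_adj huniv hc2).subset
      fun v hv => (hmem v).imp_right (Or.resolve_left · hv)
  have hC2 : IsAssociationSet G C2 :=
    isAssociationSet_of_isClique_compl <| (isClique_union_of_forall_adj huniv hc1).subset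
      fun v hv => (hmem v).imp_right (Or.resolve_right · hv)
  refine le_antisymm (le_min (le_min (optAsso_le_ncard hU) (optAsso_le_ncard hC1))
    (optAsso_le_ncard hC2)) ?_
  obtain ⟨X, hX, hXcard⟩ := exists_isAssociationSet_ncard_eq_optAsso G
  have hcontains : U ⊆ X ∨ C1 ⊆ X ∨ C2 ⊆ X := by
    by_contra! hmiss
    obtain ⟨u, hu, huX⟩ := Set.not_subset.mp hmiss.1
    obtain ⟨a, ha, haX⟩ := Set.not_subset.mp hmiss.2.1
    obtain ⟨c, hc, hcX⟩ := Set.not_subset.mp hmiss.2.2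
    exact hnoedge a ha c hc <| hX.adj_of_forall_adj (huniv u hu) huX haX hcX
      (hUC1.ne_of_mem hu ha).symm (hUC2.ne_of_mem hu hc).symm (hC1C2.ne_of_mem ha hc)
  rw [← hXcard]
  rcases hcontains with h | h | h
  · exact (min_le_left _ _).trans ((min_le_left _ _).trans (Set.ncard_le_ncard h))
  · exact (min_le_left _ _).trans ((min_le_right _ _).trans (Set.ncard_le_ncard h))
  · exact (min_le_right _ _).trans (Set.ncard_le_ncard h)
end

section
/- Let G be a finite simple graph and M a module of G that induces a clique. Then every association set X of G of minimum cardinality satisfies M ⊆ X or M ∩ X = ∅. -/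
open SimpleGraph

/-!
If `M` is a clique module, any two `u v ∈ M` are true twins: they have the same closed
neighbourhood. Hence if `u ∈ X` and `v ∉ X`, putting `u` back into `G - X` only adds a
copy of `v` to the clique of `G - X` containing `v`, so `X \ {u}` is a smaller association set.
-/

open Relation

section

variable {V : Type*} {G : SimpleGraph V}

theorem isAssociationSet_iff_reflGen_trans {X : Set V} :
    IsAssociationSet G X ↔ ∀ a b c, a ∉ X → b ∉ X → c ∉ X →
      ReflGen G.Adj a b → ReflGen G.Adj b c → ReflGen G.Adj a c := by
  simp only [IsAssociationSet, reflGen_iff]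
  constructor
  · rintro hX a b c ha hb hc (rfl | hab) (rfl | hbc)
    exacts [.inl rfl, .inr hbc, .inr hab,
      (eq_or_ne c a).imp id (hX a b c ha hb hc hab hbc ∘ Ne.symm)]
  · intro hX a b c ha hb hc hab hbc hac
    exact (hX a b c ha hb hc (.inr hab) (.inr hbc)).resolve_left hac.symm

theorem SimpleGraph.reflGen_adj_comm {x y : V} : ReflGen G.Adj x y ↔ ReflGen G.Adj y x :=
  have := G.symm
  comm

theorem SimpleGraph.IsClique.reflGen_adj {s : Set V} (hs : G.IsClique s) {x y : V}
    (hx : x ∈ s) (hy : y ∈ s) : ReflGen G.Adj x y := by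
  obtain rfl | hxy := eq_or_ne x y
  exacts [.refl, .single (hs hx hy hxy)]

theorem IsModule.reflGen_adj_iff_of_isClique {M : Set V} (hmod : IsModule G M)
    (hclique : G.IsClique M) {u v : V} (hu : u ∈ M) (hv : v ∈ M) (x : V) :
    ReflGen G.Adj x u ↔ ReflGen G.Adj x v := by
  by_cases hx : x ∈ M
  · exact iff_of_true (hclique.reflGen_adj hx hu) (hclique.reflGen_adj hx hv)
  have hxu : x ≠ u := ne_of_mem_of_not_mem hu hx |>.symm
  have hxv : x ≠ v := ne_of_mem_of_not_mem hv hx |>.symm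
  simp only [reflGen_iff, hxu.symm, hxv.symm, false_or]
  rcases hmod x hx with hall | hnone
  · exact iff_of_true (hall u hu) (hall v hv)
  · exact iff_of_false (hnone u hu) (hnone v hv)

theorem IsAssociationSet.diff_singleton_of_reflGen_adj_iff {X : Set V}
    (hX : IsAssociationSet G X) {u v : V} (hv : v ∉ X)
    (htwin : ∀ x, ReflGen G.Adj x u ↔ ReflGen G.Adj x v) :
    IsAssociationSet G (X \ {u}) := by
  rw [isAssociationSet_iff_reflGen_trans] at hX ⊢
  classical
  -- Replacing `u` by its twin `v` maps `G - (X \ {u})` into `G - X` and preserves `ReflGen G.Adj`.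
  let f x := if x = u then v else x
  have hf_mem : ∀ x ∉ X \ {u}, f x ∉ X := by
    intro x hx
    by_cases hxu : x = u
    · simpa [f, hxu] using hv
    · simpa [f, hxu] using hx
  have hf_left : ∀ x y, ReflGen G.Adj (f x) y ↔ ReflGen G.Adj x y := by
    intro x y
    by_cases hxu : x = u
    · simp only [f, hxu, if_true]
      rw [reflGen_adj_comm, ← htwin, reflGen_adj_comm]
    · simp only [f, hxu, if_false]
  have hf : ∀ x y, ReflGen G.Adj (f x) (f y) ↔ ReflGen G.Adj x y := by
    intro x y
    rw [hf_left, reflGen_adj_comm, hf_left, reflGen_adj_comm]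
  intro a b c ha hb hc hab hbc
  rw [← hf] at hab hbc ⊢
  exact hX _ _ _ (hf_mem a ha) (hf_mem b hb) (hf_mem c hc) hab hbc

end

/-- A minimum-cardinality association set contains all or none of
each clique module. -/
theorem stmt_17 {V : Type*} [Fintype V] (G : SimpleGraph V) (M : Set V)
    (hmod : IsModule G M) (hclique : G.IsClique M) (X : Set V)
    (hX : IsAssociationSet G X)
    (hmin : ∀ Y : Set V, IsAssociationSet G Y → X.ncard ≤ Y.ncard) :
    M ⊆ X ∨ M ∩ X = ∅ := by
  by_contra! h
  obtain ⟨⟨v, hvM, hvX⟩, u, huM, huX⟩ := h.imp_left Set.not_subset.mp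
  have hsmaller : IsAssociationSet G (X \ {u}) :=
    hX.diff_singleton_of_reflGen_adj_iff hvX (hmod.reflGen_adj_iff_of_isClique hclique huM hvM)
  exact (hmin _ hsmaller).not_gt (Set.ncard_sdiff_singleton_lt_of_mem huX X.toFinite)
end
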